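/- arXiv:cs/0702052 — 4 statements merged into one kernel-verified Lean document; each statement's English description precedes it below -/
import Mathlib

section
/- Let q ≥ 2 and let P be a nonzero multivariate polynomial over the finite field F_q in n variables such that the total degree of P is at most d·ν and the degree of P in each individual variable is at most d, where d < q. If each variable is chosen independently and uniformly at random from F_q, then the probability that P evaluates to a nonzero value is at least (1 - d/q)^ν. -/
/-!
Induct on the number of variables, viewing `P` as a polynomial in `x₀` whose leading coefficient
`Pₖ` (with `k ≤ d`) is a polynomial in the remaining variables of total degree at most
`deg P - k`. Wherever `Pₖ` does not vanish, at most `k` of the `q` values of `x₀` are roots, so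
the density of non-zeros of `P` is at least `(1 - k/q)` times that of `Pₖ`. The statement that
survives this induction is `density P ≥ (1 - d/q) ^ (deg P / d)`, the step being closed by
Bernoulli's inequality `(1 - d/q) ^ (k/d) ≤ 1 - k/q`.
-/

open Finset MvPolynomial

theorem Real.one_sub_div_rpow_le {k d : ℕ} {q : ℝ} (hkd : k ≤ d) (hdq : d ≤ q) :
    (1 - d / q) ^ ((k : ℝ) / d) ≤ 1 - k / q := by
  rcases Nat.eq_zero_or_pos d with rfl | hd
  · simp [Nat.le_zero.mp hkd]
  have hq : 0 < q := (Nat.cast_pos.mpr hd).trans_le hdq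
  have hkd' : (k : ℝ) ≤ d := by exact_mod_cast hkd
  have := rpow_one_add_le_one_add_mul_self (s := -(d / q)) (p := k / d)
    (by rw [neg_le_neg_iff, div_le_one hq]; exact hdq) (by positivity)
    (div_le_one_of_le₀ hkd' (Nat.cast_nonneg d))
  convert this using 1
  · ring_nf
  · field_simp
    ring

theorem one_sub_natCast_div_mem_Ioc {d q : ℕ} (h : d < q) : (1 - d / q : ℝ) ∈ Set.Ioc 0 1 := by
  have hq : (0 : ℝ) < q := by exact_mod_cast (Nat.zero_le d).trans_lt h
  refine ⟨?_, sub_le_self _ (by positivity)⟩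
  rw [sub_pos, div_lt_one hq]
  exact_mod_cast h

theorem Fin.card_filter_eq_sum_card_filter_cons {α : Type*} [Fintype α] {n : ℕ}
    (p : (Fin (n + 1) → α) → Prop) [DecidablePred p] :
    #{x | p x} = ∑ s : Fin n → α, #{a | p (Fin.cons a s)} := by
  simp only [card_filter]
  rw [← (Fin.consEquiv fun _ => α).sum_comp, Fintype.sum_prod_type, Finset.sum_comm]
  rfl

section

variable {R : Type*} [CommRing R] [IsDomain R] [Fintype R] [DecidableEq R]

theorem Polynomial.card_sub_natDegree_le_card_filter_eval_ne_zero {f : Polynomial R}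
    (hf : f ≠ 0) :
    Fintype.card R - f.natDegree ≤ #{a | f.eval a ≠ 0} := by
  have hroots : #{a | f.eval a = 0} ≤ f.natDegree :=
    card_le_degree_of_subset_roots fun a ha => by simp_all
  have := card_filter_add_card_filter_not (s := univ) (fun a => f.eval a = 0)
  rw [card_univ] at this
  simp only [ne_eq]
  omega

theorem MvPolynomial.card_filter_eval_leadingCoeff_finSuccEquiv_mul_le {n : ℕ}
    (P : MvPolynomial (Fin (n + 1)) R) :
    #{s | eval s (finSuccEquiv R n P).leadingCoeff ≠ 0} * (Fintype.card R - P.degreeOf 0)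
      ≤ #{x | eval x P ≠ 0} := by
  set Q := finSuccEquiv R n P
  rw [Fin.card_filter_eq_sum_card_filter_cons, card_eq_sum_ones, sum_mul, sum_filter]
  refine sum_le_sum fun s _ => ?_
  split_ifs with hs
  · have hQs : Q.map (eval s) ≠ 0 := fun h => hs <| by
      rw [Polynomial.leadingCoeff, ← Polynomial.coeff_map, h, Polynomial.coeff_zero]
    have hdeg : (Q.map (eval s)).natDegree ≤ P.degreeOf 0 :=
      (natDegree_finSuccEquiv P) ▸ Polynomial.natDegree_map_le
    calc 1 * (Fintype.card R - P.degreeOf 0)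
        ≤ Fintype.card R - (Q.map (eval s)).natDegree := by omega
      _ ≤ #{a | (Q.map (eval s)).eval a ≠ 0} :=
        Polynomial.card_sub_natDegree_le_card_filter_eval_ne_zero hQs
      _ = #{a | eval (Fin.cons a s) P ≠ 0} := by simp only [Q, eval_eq_eval_mv_eval']
  · simp

theorem MvPolynomial.one_sub_div_rpow_totalDegree_div_le_card_filter_eval_ne_zero {d : ℕ}
    (hd : d < Fintype.card R) :
    ∀ {n : ℕ} (P : MvPolynomial (Fin n) R), P ≠ 0 → (∀ i, P.degreeOf i ≤ d) →
      (1 - d / Fintype.card R : ℝ) ^ ((P.totalDegree : ℝ) / d)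
        ≤ #{x | eval x P ≠ 0} / (Fintype.card R : ℝ) ^ n
  | 0, P, hP, _ => by
    rw [P.eq_C_of_isEmpty] at hP ⊢
    simp [C_ne_zero.mp hP]
  | n + 1, P, hP, hvar => by
    set q := Fintype.card R
    set Q := finSuccEquiv R n P
    set k := Q.natDegree
    obtain ⟨hb0, hb1⟩ := one_sub_natCast_div_mem_Ioc hd
    have hq : (q : ℝ) ≠ 0 := by exact_mod_cast ((Nat.zero_le d).trans_lt hd).ne'
    have hkd : k ≤ d := (natDegree_finSuccEquiv P).trans_le (hvar 0)
    have hlead : Q.leadingCoeff ≠ 0 :=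
      Polynomial.leadingCoeff_ne_zero.mpr (EmbeddingLike.map_ne_zero_iff.mpr hP)
    have hlead_deg : Q.leadingCoeff.totalDegree + k ≤ P.totalDegree :=
      totalDegree_coeff_finSuccEquiv_add_le P k hlead
    have ih := one_sub_div_rpow_totalDegree_div_le_card_filter_eval_ne_zero hd Q.leadingCoeff hlead
      fun j => (degreeOf_coeff_finSuccEquiv P j k).trans (hvar j.succ)
    have hcount : (#{s | eval s Q.leadingCoeff ≠ 0} : ℝ) * (q - k) ≤ #{x | eval x P ≠ 0} := by
      have := card_filter_eval_leadingCoeff_finSuccEquiv_mul_le P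
      rw [← natDegree_finSuccEquiv] at this
      rw [← Nat.cast_sub (hkd.trans hd.le)]
      exact_mod_cast this
    calc (1 - d / q : ℝ) ^ ((P.totalDegree : ℝ) / d)
        ≤ (1 - d / q : ℝ) ^ ((Q.leadingCoeff.totalDegree : ℝ) / d + (k : ℝ) / d) := by
          refine Real.rpow_le_rpow_of_exponent_ge hb0 hb1 ?_
          rw [← add_div]
          gcongr
          exact_mod_cast hlead_deg
      _ = (1 - d / q : ℝ) ^ ((Q.leadingCoeff.totalDegree : ℝ) / d) * (1 - d / q) ^ ((k : ℝ) / d) :=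
          Real.rpow_add hb0 _ _
      _ ≤ #{s | eval s Q.leadingCoeff ≠ 0} / (q : ℝ) ^ n * (1 - k / q) := by
          gcongr
          exact Real.one_sub_div_rpow_le hkd (by exact_mod_cast hd.le)
      _ = #{s | eval s Q.leadingCoeff ≠ 0} * (q - k) / (q : ℝ) ^ (n + 1) := by
          field_simp
          ring
      _ ≤ #{x | eval x P ≠ 0} / (q : ℝ) ^ (n + 1) := by gcongr

end

theorem stmt0_general {K : Type*} [Field K] [Fintype K] [DecidableEq K]
    (q d ν n : ℕ) (hq : Fintype.card K = q) (hdq : d < q)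
    (P : MvPolynomial (Fin n) K) (hP : P ≠ 0)
    (hdeg : P.totalDegree ≤ d * ν)
    (hvar : ∀ i : Fin n, P.degreeOf i ≤ d) :
    ((Finset.univ.filter fun x : Fin n → K => MvPolynomial.eval x P ≠ 0).card : ℝ)
        / (q : ℝ) ^ n
      ≥ (1 - (d : ℝ) / q) ^ ν := by
  subst hq
  obtain ⟨hb0, hb1⟩ := one_sub_natCast_div_mem_Ioc hdq
  have hexp : (P.totalDegree : ℝ) / d ≤ ν :=
    div_le_of_le_mul₀ d.cast_nonneg ν.cast_nonneg (by rw [mul_comm]; exact_mod_cast hdeg)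
  calc (1 - (d : ℝ) / Fintype.card K) ^ ν
      = (1 - (d : ℝ) / Fintype.card K) ^ (ν : ℝ) := (Real.rpow_natCast _ ν).symm
    _ ≤ (1 - (d : ℝ) / Fintype.card K) ^ ((P.totalDegree : ℝ) / d) :=
      Real.rpow_le_rpow_of_exponent_ge hb0 hb1 hexp
    _ ≤ _ := one_sub_div_rpow_totalDegree_div_le_card_filter_eval_ne_zero hdq P hP hvar

/-- Schwartz–Zippel style bound: if a nonzero multivariate polynomial over a
finite field with `q` elements has total degree at most `d * ν` and degree at
most `d < q` in each individual variable, then the fraction of points where it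
is nonzero is at least `(1 - d/q)^ν`. -/
theorem stmt0 {K : Type*} [Field K] [Fintype K] [DecidableEq K]
    (q d ν n : ℕ) (hq : Fintype.card K = q) (hq2 : 2 ≤ q) (hdq : d < q)
    (P : MvPolynomial (Fin n) K) (hP : P ≠ 0)
    (hdeg : P.totalDegree ≤ d * ν)
    (hvar : ∀ i : Fin n, P.degreeOf i ≤ d) :
    ((Finset.univ.filter fun x : Fin n → K => MvPolynomial.eval x P ≠ 0).card : ℝ)
        / (q : ℝ) ^ n
      ≥ (1 - (d : ℝ) / q) ^ ν :=
  stmt0_general q d ν n hq hdq P hP hdeg hvar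
end

section
/- Let q ≥ 2 and let P be a nonzero multilinear polynomial (degree at most 1 in each variable) over F_q in n variables with total degree at most η. If each variable is chosen independently and uniformly at random from F_q, then the probability that P is nonzero is at least (1 - 1/q)^η. -/
open MvPolynomial Finset

lemma stmt1_aux {K : Type*} [Field K] [Fintype K] [DecidableEq K] (n : ℕ) :
    ∀ (P : MvPolynomial (Fin n) K), P ≠ 0 → (∀ i, P.degreeOf i ≤ 1) →
    (1 - 1 / (Fintype.card K : ℝ)) ^ P.totalDegree * (Fintype.card K : ℝ) ^ n
      ≤ ((Finset.univ.filter fun x : Fin n → K => MvPolynomial.eval x P ≠ 0).card : ℝ) := by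
  have hq1 : (1 : ℝ) ≤ (Fintype.card K : ℝ) := by
    exact_mod_cast Fintype.card_pos
  have hq0 : (0 : ℝ) < (Fintype.card K : ℝ) := lt_of_lt_of_le one_pos hq1
  have hb0 : (0 : ℝ) ≤ 1 - 1 / (Fintype.card K : ℝ) := by
    have : 1 / (Fintype.card K : ℝ) ≤ 1 := by
      rw [div_le_one hq0]; exact hq1
    linarith
  have hb1 : (1 - 1 / (Fintype.card K : ℝ)) ≤ 1 := by
    have : 0 < 1 / (Fintype.card K : ℝ) := by positivity
    linarith
  induction n with
  | zero =>
      intro P hP hvar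
      obtain ⟨a, rfl⟩ := MvPolynomial.C_surjective (Fin 0) P
      have ha : a ≠ 0 := fun h => hP (by rw [h, map_zero])
      have hfilter : (Finset.univ.filter fun x : Fin 0 → K => MvPolynomial.eval x (C a) ≠ 0)
          = Finset.univ := by
        apply Finset.filter_true_of_mem
        intro x _
        simpa using ha
      rw [hfilter, totalDegree_C]
      simp
  | succ n ih =>
      intro P hP hvar
      set q : ℝ := (Fintype.card K : ℝ)
      set Q := finSuccEquiv K n P with hQdef
      have hQne : Q ≠ 0 := fun h => hP ((map_eq_zero_iff _ (finSuccEquiv K n).injective).mp h)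
      set A := Q.coeff 1 with hA
      set B := Q.coeff 0 with hB
      have hdegQ : Q.natDegree ≤ 1 := by
        rw [hQdef, natDegree_finSuccEquiv]; exact hvar 0
      have hQeq : Q = Polynomial.C A * Polynomial.X + Polynomial.C B :=
        Polynomial.eq_X_add_C_of_degree_le_one (Polynomial.natDegree_le_iff_degree_le.mp hdegQ)
      have heval : ∀ (y : K) (s : Fin n → K),
          MvPolynomial.eval (Fin.cons y s : Fin (n+1) → K) P
            = MvPolynomial.eval s A * y + MvPolynomial.eval s B := by
        intro y s
        rw [eval_eq_eval_mv_eval', ← hQdef, hQeq]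
        simp
      -- counting identity
      have hcount : ((Finset.univ.filter fun x : Fin (n+1) → K =>
            MvPolynomial.eval x P ≠ 0).card : ℕ)
          = ∑ s : Fin n → K, (Finset.univ.filter fun y : K =>
              MvPolynomial.eval s A * y + MvPolynomial.eval s B ≠ 0).card := by
        rw [Finset.card_filter]
        rw [← Fintype.sum_equiv (Fin.consEquiv fun _ : Fin (n+1) => K)
          (fun p : K × (Fin n → K) =>
            if MvPolynomial.eval (Fin.cons p.1 p.2 : Fin (n+1) → K) P ≠ 0 then 1 else 0)
          (fun x => if MvPolynomial.eval x P ≠ 0 then 1 else 0) (fun p => rfl)]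
        rw [Fintype.sum_prod_type_right]
        congr 1
        ext s
        rw [Finset.card_filter]
        congr 1
        ext y
        rw [heval y s]
      by_cases hA0 : A = 0
      · -- P does not depend on the first variable
        have hB0 : B ≠ 0 := by
          intro h
          apply hQne
          rw [hQeq, hA0, h]; simp
        have hBvar : ∀ j : Fin n, B.degreeOf j ≤ 1 := fun j =>
          le_trans (degreeOf_coeff_finSuccEquiv P j 0) (hvar j.succ)
        have hBtd : B.totalDegree ≤ P.totalDegree := by
          simpa using totalDegree_coeff_finSuccEquiv_add_le P 0 hB0
        have hcount2 : ((Finset.univ.filter fun x : Fin (n+1) → K =>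
              MvPolynomial.eval x P ≠ 0).card : ℕ)
            = Fintype.card K * (Finset.univ.filter fun s : Fin n → K =>
                MvPolynomial.eval s B ≠ 0).card := by
          rw [hcount, Finset.card_filter, Finset.mul_sum]
          congr 1
          ext s
          by_cases hs : MvPolynomial.eval s B ≠ 0
          · rw [if_pos hs]
            have : (Finset.univ.filter fun y : K =>
                MvPolynomial.eval s A * y + MvPolynomial.eval s B ≠ 0) = Finset.univ := by
              apply Finset.filter_true_of_mem
              intro y _
              rw [hA0]; simpa using hs
            rw [this]; simp
          · rw [if_neg hs]
            push_neg at hs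
            have : (Finset.univ.filter fun y : K =>
                MvPolynomial.eval s A * y + MvPolynomial.eval s B ≠ 0) = ∅ := by
              apply Finset.filter_false_of_mem
              intro y _
              rw [hA0, hs]; simp
            rw [this]; simp
        have hIH := ih B hB0 hBvar
        calc (1 - 1/q) ^ P.totalDegree * q ^ (n+1)
            ≤ (1 - 1/q) ^ B.totalDegree * q ^ (n+1) := by
              apply mul_le_mul_of_nonneg_right _ (by positivity)
              exact pow_le_pow_of_le_one hb0 hb1 hBtd
          _ = q * ((1 - 1/q) ^ B.totalDegree * q ^ n) := by ring
          _ ≤ q * ((Finset.univ.filter fun s : Fin n → K =>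
                MvPolynomial.eval s B ≠ 0).card : ℝ) :=
              mul_le_mul_of_nonneg_left hIH (le_of_lt hq0)
          _ = ((Finset.univ.filter fun x : Fin (n+1) → K =>
                MvPolynomial.eval x P ≠ 0).card : ℝ) := by
              rw [hcount2]; push_cast; ring
      · -- the leading coefficient A is nonzero
        have hAvar : ∀ j : Fin n, A.degreeOf j ≤ 1 := fun j =>
          le_trans (degreeOf_coeff_finSuccEquiv P j 1) (hvar j.succ)
        have hAtd : A.totalDegree + 1 ≤ P.totalDegree :=
          totalDegree_coeff_finSuccEquiv_add_le P 1 hA0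
        have hIH := ih A hA0 hAvar
        -- for s with eval s A ≠ 0, at least q - 1 values of y work
        have hinner : ∀ s : Fin n → K, MvPolynomial.eval s A ≠ 0 →
            Fintype.card K - 1 ≤ (Finset.univ.filter fun y : K =>
              MvPolynomial.eval s A * y + MvPolynomial.eval s B ≠ 0).card := by
          intro s hs
          have h1 : (Finset.univ.filter fun y : K =>
              MvPolynomial.eval s A * y + MvPolynomial.eval s B = 0).card ≤ 1 := by
            apply Finset.card_le_one.mpr
            intro a ha b hb
            simp only [Finset.mem_filter] at ha hb
            exact mul_left_cancel₀ hs (by linear_combination ha.2 - hb.2)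
          have h2 := Finset.card_filter_add_card_filter_not
            (s := (Finset.univ : Finset K))
            (p := fun y : K => MvPolynomial.eval s A * y + MvPolynomial.eval s B = 0)
          simp only [Finset.card_univ] at h2
          simp only [ne_eq]
          omega
        have hsum : (Finset.univ.filter fun s : Fin n → K =>
              MvPolynomial.eval s A ≠ 0).card * (Fintype.card K - 1)
            ≤ ∑ s : Fin n → K, (Finset.univ.filter fun y : K =>
              MvPolynomial.eval s A * y + MvPolynomial.eval s B ≠ 0).card := by
          calc (Finset.univ.filter fun s : Fin n → K =>
                MvPolynomial.eval s A ≠ 0).card * (Fintype.card K - 1)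
              = ∑ s ∈ Finset.univ.filter fun s : Fin n → K =>
                  MvPolynomial.eval s A ≠ 0, (Fintype.card K - 1) := by
                rw [Finset.sum_const, smul_eq_mul]
            _ ≤ ∑ s ∈ Finset.univ.filter fun s : Fin n → K =>
                  MvPolynomial.eval s A ≠ 0, (Finset.univ.filter fun y : K =>
                  MvPolynomial.eval s A * y + MvPolynomial.eval s B ≠ 0).card := by
                apply Finset.sum_le_sum
                intro s hsmem
                exact hinner s (Finset.mem_filter.mp hsmem).2
            _ ≤ ∑ s : Fin n → K, (Finset.univ.filter fun y : K =>
                  MvPolynomial.eval s A * y + MvPolynomial.eval s B ≠ 0).card :=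
                Finset.sum_le_sum_of_subset (Finset.filter_subset _ _)
        have hqm1 : ((Fintype.card K - 1 : ℕ) : ℝ) = q - 1 := by
          have : (1:ℕ) ≤ Fintype.card K := Fintype.card_pos
          push_cast [this]; ring
        calc (1 - 1/q) ^ P.totalDegree * q ^ (n+1)
            ≤ (1 - 1/q) ^ (A.totalDegree + 1) * q ^ (n+1) := by
              apply mul_le_mul_of_nonneg_right _ (by positivity)
              exact pow_le_pow_of_le_one hb0 hb1 hAtd
          _ = ((1 - 1/q) ^ A.totalDegree * q ^ n) * ((1 - 1/q) * q) := by ring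
          _ = ((1 - 1/q) ^ A.totalDegree * q ^ n) * (q - 1) := by
              congr 1
              field_simp
          _ ≤ ((Finset.univ.filter fun s : Fin n → K =>
                MvPolynomial.eval s A ≠ 0).card : ℝ) * (q - 1) := by
              apply mul_le_mul_of_nonneg_right hIH
              linarith
          _ ≤ ((Finset.univ.filter fun x : Fin (n+1) → K =>
                MvPolynomial.eval x P ≠ 0).card : ℝ) := by
              rw [hcount]
              push_cast [← hqm1]
              exact_mod_cast hsum

/-- For a nonzero multilinear polynomial (degree at most 1 in each variable)
over a finite field with `q` elements, of total degree at most `η`, the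
fraction of points where it is nonzero is at least `(1 - 1/q)^η`. -/
theorem stmt1 {K : Type*} [Field K] [Fintype K] [DecidableEq K]
    (q η n : ℕ) (hq : Fintype.card K = q) (hq2 : 2 ≤ q)
    (P : MvPolynomial (Fin n) K) (hP : P ≠ 0)
    (hdeg : P.totalDegree ≤ η)
    (hvar : ∀ i : Fin n, P.degreeOf i ≤ 1) :
    ((Finset.univ.filter fun x : Fin n → K => MvPolynomial.eval x P ≠ 0).card : ℝ)
        / (q : ℝ) ^ n
      ≥ (1 - 1 / (q : ℝ)) ^ η := by
  have hq0 : (0 : ℝ) < (q : ℝ) := by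
    have : 0 < q := by omega
    exact_mod_cast this
  have hb0 : (0 : ℝ) ≤ 1 - 1 / (q : ℝ) := by
    have : 1 / (q : ℝ) ≤ 1 := by
      rw [div_le_one hq0]; exact_mod_cast by omega
    linarith
  have hb1 : (1 - 1 / (q : ℝ)) ≤ 1 := by
    have : 0 < 1 / (q : ℝ) := by positivity
    linarith
  have haux := stmt1_aux n P hP hvar
  rw [hq] at haux
  rw [ge_iff_le, le_div_iff₀ (by positivity)]
  calc (1 - 1/(q:ℝ)) ^ η * (q:ℝ) ^ n
      ≤ (1 - 1/(q:ℝ)) ^ P.totalDegree * (q:ℝ) ^ n := by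
        apply mul_le_mul_of_nonneg_right _ (by positivity)
        exact pow_le_pow_of_le_one hb0 hb1 hdeg
    _ ≤ _ := haux
end

section
/- Let Z be a block matrix over a field of the form Z = [[I_r, 0, 0, 0, 0], [U_1, W_11, W_12, W_13, 0], [0, U_2, W_21, W_22, 0], [0, 0, U_3, W_31, I_r], [0, 0, 0, U_4, 0]], where U_1, U_3 are r×r upper triangular with unit diagonal, U_2 and U_4 are square upper triangular with unit diagonal, and the W blocks have compatible dimensions. Let C = [[W_11, W_12],[U_2, W_21]] be the critical submatrix. Then |det Z| = |det C|, i.e., det Z = ± det C. -/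
open Matrix

/-- The Edmonds matrix `Z` with block structure
`[[I, 0, 0, 0, 0], [U₁, W₁₁, W₁₂, W₁₃, 0], [0, U₂, W₂₁, W₂₂, 0],
[0, 0, U₃, W₃₁, I], [0, 0, 0, U₄, 0]]`.
Row blocks have sizes `r, r, k, r, m`; column blocks have sizes `r, k, r, m, r`. -/
def edmondsMat {K : Type*} [Field K] {r k m : ℕ}
    (U1 U3 W12 : Matrix (Fin r) (Fin r) K)
    (U2 : Matrix (Fin k) (Fin k) K) (U4 : Matrix (Fin m) (Fin m) K)
    (W11 : Matrix (Fin r) (Fin k) K)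
    (W13 W31 : Matrix (Fin r) (Fin m) K)
    (W21 : Matrix (Fin k) (Fin r) K) (W22 : Matrix (Fin k) (Fin m) K) :
    Matrix (Fin r ⊕ Fin r ⊕ Fin k ⊕ Fin r ⊕ Fin m)
      (Fin r ⊕ Fin k ⊕ Fin r ⊕ Fin m ⊕ Fin r) K :=
  Matrix.of fun i j =>
    match i, j with
    | Sum.inl i1, Sum.inl j1 => if i1 = j1 then (1 : K) else 0
    | Sum.inl _, _ => 0
    | Sum.inr (Sum.inl i2), Sum.inl j1 => U1 i2 j1
    | Sum.inr (Sum.inl i2), Sum.inr (Sum.inl j2) => W11 i2 j2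
    | Sum.inr (Sum.inl i2), Sum.inr (Sum.inr (Sum.inl j3)) => W12 i2 j3
    | Sum.inr (Sum.inl i2), Sum.inr (Sum.inr (Sum.inr (Sum.inl j4))) => W13 i2 j4
    | Sum.inr (Sum.inl _), Sum.inr (Sum.inr (Sum.inr (Sum.inr _))) => 0
    | Sum.inr (Sum.inr (Sum.inl i3)), Sum.inr (Sum.inl j2) => U2 i3 j2
    | Sum.inr (Sum.inr (Sum.inl i3)), Sum.inr (Sum.inr (Sum.inl j3)) => W21 i3 j3
    | Sum.inr (Sum.inr (Sum.inl i3)), Sum.inr (Sum.inr (Sum.inr (Sum.inl j4))) => W22 i3 j4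
    | Sum.inr (Sum.inr (Sum.inl _)), _ => 0
    | Sum.inr (Sum.inr (Sum.inr (Sum.inl i4))), Sum.inr (Sum.inr (Sum.inl j3)) => U3 i4 j3
    | Sum.inr (Sum.inr (Sum.inr (Sum.inl i4))), Sum.inr (Sum.inr (Sum.inr (Sum.inl j4))) => W31 i4 j4
    | Sum.inr (Sum.inr (Sum.inr (Sum.inl i4))), Sum.inr (Sum.inr (Sum.inr (Sum.inr j5))) =>
        if i4 = j5 then (1 : K) else 0
    | Sum.inr (Sum.inr (Sum.inr (Sum.inl _))), _ => 0
    | Sum.inr (Sum.inr (Sum.inr (Sum.inr i5))), Sum.inr (Sum.inr (Sum.inr (Sum.inl j4))) => U4 i5 j4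
    | Sum.inr (Sum.inr (Sum.inr (Sum.inr _))), _ => 0

/-- The critical matrix `C = [[W₁₁, W₁₂], [U₂, W₂₁]]`, made square by
reindexing the rows along `Fin k ⊕ Fin r ≃ Fin r ⊕ Fin k`. -/
def criticalMat {K : Type*} [Field K] {r k : ℕ}
    (W12 : Matrix (Fin r) (Fin r) K) (U2 : Matrix (Fin k) (Fin k) K)
    (W11 : Matrix (Fin r) (Fin k) K) (W21 : Matrix (Fin k) (Fin r) K) :
    Matrix (Fin k ⊕ Fin r) (Fin k ⊕ Fin r) K :=
  (Matrix.fromBlocks W11 W12 U2 W21).submatrix (Equiv.sumComm (Fin k) (Fin r)) id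

/-!
Expanding along the identity block in the first block row and along the identity block in the
last block column removes `U₁`, `U₃` and both identities; what remains is block upper triangular
with diagonal blocks `C` and `U₄`, so `det Z = det C · det U₄ = det C` up to the sign of the row
permutation that exhibits this shape.
-/

namespace Matrix

variable {m n R : Type*} [CommRing R]

theorem det_eq_one_of_isUpperTriangular [Fintype n] [DecidableEq n] [LinearOrder n]
    {M : Matrix n n R} (h : M.IsUpperTriangular) (hdiag : ∀ i, M i i = 1) : M.det = 1 := by
  rw [det_of_isUpperTriangular h]
  exact Finset.prod_eq_one fun i _ => hdiag i

theorem det_submatrix_equiv_eq_or_eq_neg [Fintype n] [DecidableEq n] (A : Matrix m n R)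
    (e e' : n ≃ m) :
    (A.submatrix e id).det = (A.submatrix e' id).det ∨
      (A.submatrix e id).det = -(A.submatrix e' id).det := by
  have hperm : A.submatrix e id = (A.submatrix e' id).submatrix (e.trans e'.symm) id := by
    ext i j
    simp
  rw [hperm, det_permute]
  rcases Int.units_eq_one_or (Equiv.Perm.sign (e.trans e'.symm)) with h | h <;> simp [h]

end Matrix

section Edmonds

variable {K : Type*} [Field K] {r k m : ℕ}

-- Row blocks in the order 1, 3, 2, 4, 5 and column blocks in the order 1, 2, 3, 5, 4, grouped so
-- that `Z` becomes nested `fromBlocks` with `criticalMat` and `U₄` on the diagonal.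
def edmondsRowEquiv (r k m : ℕ) :
    (((Fin r ⊕ (Fin k ⊕ Fin r)) ⊕ Fin r) ⊕ Fin m) ≃
      (Fin r ⊕ Fin r ⊕ Fin k ⊕ Fin r ⊕ Fin m) where
  toFun
    | Sum.inl (Sum.inl (Sum.inl x)) => Sum.inl x
    | Sum.inl (Sum.inl (Sum.inr (Sum.inl x))) => Sum.inr (Sum.inr (Sum.inl x))
    | Sum.inl (Sum.inl (Sum.inr (Sum.inr x))) => Sum.inr (Sum.inl x)
    | Sum.inl (Sum.inr x) => Sum.inr (Sum.inr (Sum.inr (Sum.inl x)))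
    | Sum.inr x => Sum.inr (Sum.inr (Sum.inr (Sum.inr x)))
  invFun
    | Sum.inl x => Sum.inl (Sum.inl (Sum.inl x))
    | Sum.inr (Sum.inl x) => Sum.inl (Sum.inl (Sum.inr (Sum.inr x)))
    | Sum.inr (Sum.inr (Sum.inl x)) => Sum.inl (Sum.inl (Sum.inr (Sum.inl x)))
    | Sum.inr (Sum.inr (Sum.inr (Sum.inl x))) => Sum.inl (Sum.inr x)
    | Sum.inr (Sum.inr (Sum.inr (Sum.inr x))) => Sum.inr x
  left_inv x := by rcases x with (((x | (x | x)) | x) | x) <;> rfl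
  right_inv x := by rcases x with (x | (x | (x | (x | x)))) <;> rfl

def edmondsColEquiv (r k m : ℕ) :
    (((Fin r ⊕ (Fin k ⊕ Fin r)) ⊕ Fin r) ⊕ Fin m) ≃
      (Fin r ⊕ Fin k ⊕ Fin r ⊕ Fin m ⊕ Fin r) where
  toFun
    | Sum.inl (Sum.inl (Sum.inl x)) => Sum.inl x
    | Sum.inl (Sum.inl (Sum.inr (Sum.inl x))) => Sum.inr (Sum.inl x)
    | Sum.inl (Sum.inl (Sum.inr (Sum.inr x))) => Sum.inr (Sum.inr (Sum.inl x))
    | Sum.inl (Sum.inr x) => Sum.inr (Sum.inr (Sum.inr (Sum.inr x)))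
    | Sum.inr x => Sum.inr (Sum.inr (Sum.inr (Sum.inl x)))
  invFun
    | Sum.inl x => Sum.inl (Sum.inl (Sum.inl x))
    | Sum.inr (Sum.inl x) => Sum.inl (Sum.inl (Sum.inr (Sum.inl x)))
    | Sum.inr (Sum.inr (Sum.inl x)) => Sum.inl (Sum.inl (Sum.inr (Sum.inr x)))
    | Sum.inr (Sum.inr (Sum.inr (Sum.inl x))) => Sum.inr x
    | Sum.inr (Sum.inr (Sum.inr (Sum.inr x))) => Sum.inl (Sum.inr x)
  left_inv x := by rcases x with (((x | (x | x)) | x) | x) <;> rfl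
  right_inv x := by rcases x with (x | (x | (x | (x | x)))) <;> rfl

theorem edmondsMat_submatrix_eq_fromBlocks
    (U1 U3 W12 : Matrix (Fin r) (Fin r) K)
    (U2 : Matrix (Fin k) (Fin k) K) (U4 : Matrix (Fin m) (Fin m) K)
    (W11 : Matrix (Fin r) (Fin k) K)
    (W13 W31 : Matrix (Fin r) (Fin m) K)
    (W21 : Matrix (Fin k) (Fin r) K) (W22 : Matrix (Fin k) (Fin m) K) :
    (edmondsMat U1 U3 W12 U2 U4 W11 W13 W31 W21 W22).submatrix
        (edmondsRowEquiv r k m) (edmondsColEquiv r k m) =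
      fromBlocks
        (fromBlocks
          (fromBlocks 1 0 (fromRows 0 U1) (criticalMat W12 U2 W11 W21))
          0 (fromCols 0 (fromCols 0 U3)) 1)
        (fromRows (fromRows 0 (fromRows W22 W13)) W31)
        0 U4 := by
  ext i j
  rcases i with (((i | (i | i)) | i) | i) <;> rcases j with (((j | (j | j)) | j) | j) <;>
    simp [edmondsMat, edmondsRowEquiv, edmondsColEquiv, criticalMat, fromBlocks, fromCols,
      one_apply]

theorem det_edmondsMat_submatrix
    (U1 U3 W12 : Matrix (Fin r) (Fin r) K)
    (U2 : Matrix (Fin k) (Fin k) K) (U4 : Matrix (Fin m) (Fin m) K)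
    (W11 : Matrix (Fin r) (Fin k) K)
    (W13 W31 : Matrix (Fin r) (Fin m) K)
    (W21 : Matrix (Fin k) (Fin r) K) (W22 : Matrix (Fin k) (Fin m) K) :
    ((edmondsMat U1 U3 W12 U2 U4 W11 W13 W31 W21 W22).submatrix
        (edmondsRowEquiv r k m) (edmondsColEquiv r k m)).det =
      (criticalMat W12 U2 W11 W21).det * U4.det := by
  rw [edmondsMat_submatrix_eq_fromBlocks, det_fromBlocks_zero₂₁, det_fromBlocks_zero₁₂,
    det_fromBlocks_zero₁₂, det_one, one_mul, mul_one]

end Edmonds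

theorem stmt2_general {K : Type*} [Field K] (r k m : ℕ)
    (U1 U3 W12 : Matrix (Fin r) (Fin r) K)
    (U2 : Matrix (Fin k) (Fin k) K) (U4 : Matrix (Fin m) (Fin m) K)
    (W11 : Matrix (Fin r) (Fin k) K)
    (W13 W31 : Matrix (Fin r) (Fin m) K)
    (W21 : Matrix (Fin k) (Fin r) K) (W22 : Matrix (Fin k) (Fin m) K)
    (hU4 : ∀ i j : Fin m, j < i → U4 i j = 0) (hU4d : ∀ i, U4 i i = 1)
    (e : (Fin r ⊕ Fin k ⊕ Fin r ⊕ Fin m ⊕ Fin r) ≃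
      (Fin r ⊕ Fin r ⊕ Fin k ⊕ Fin r ⊕ Fin m)) :
    ((edmondsMat U1 U3 W12 U2 U4 W11 W13 W31 W21 W22).submatrix e id).det
        = (criticalMat W12 U2 W11 W21).det ∨
      ((edmondsMat U1 U3 W12 U2 U4 W11 W13 W31 W21 W22).submatrix e id).det
        = -(criticalMat W12 U2 W11 W21).det := by
  set Z := edmondsMat U1 U3 W12 U2 U4 W11 W13 W31 W21 W22
  set row := edmondsRowEquiv r k m
  set col := edmondsColEquiv r k m
  have hdetU4 : U4.det = 1 := det_eq_one_of_isUpperTriangular (fun i j h => hU4 i j h) hU4d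
  have hreindex :
      (Z.submatrix (col.symm.trans row) id).submatrix col col = Z.submatrix row col := by
    ext i j
    simp
  have hZ : (Z.submatrix (col.symm.trans row) id).det = (criticalMat W12 U2 W11 W21).det := by
    rw [← det_submatrix_equiv_self col, hreindex, det_edmondsMat_submatrix, hdetU4, mul_one]
  rw [← hZ]
  exact det_submatrix_equiv_eq_or_eq_neg Z e _

/-- The determinant of the Edmonds matrix equals, up to sign, the
determinant of its critical matrix: `det Z = ± det C`. -/
theorem stmt2 {K : Type*} [Field K] (r k m : ℕ)
    (U1 U3 W12 : Matrix (Fin r) (Fin r) K)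
    (U2 : Matrix (Fin k) (Fin k) K) (U4 : Matrix (Fin m) (Fin m) K)
    (W11 : Matrix (Fin r) (Fin k) K)
    (W13 W31 : Matrix (Fin r) (Fin m) K)
    (W21 : Matrix (Fin k) (Fin r) K) (W22 : Matrix (Fin k) (Fin m) K)
    (hU1 : ∀ i j : Fin r, j < i → U1 i j = 0) (hU1d : ∀ i, U1 i i = 1)
    (hU2 : ∀ i j : Fin k, j < i → U2 i j = 0) (hU2d : ∀ i, U2 i i = 1)
    (hU3 : ∀ i j : Fin r, j < i → U3 i j = 0) (hU3d : ∀ i, U3 i i = 1)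
    (hU4 : ∀ i j : Fin m, j < i → U4 i j = 0) (hU4d : ∀ i, U4 i i = 1)
    (e : (Fin r ⊕ Fin k ⊕ Fin r ⊕ Fin m ⊕ Fin r) ≃
      (Fin r ⊕ Fin r ⊕ Fin k ⊕ Fin r ⊕ Fin m)) :
    ((edmondsMat U1 U3 W12 U2 U4 W11 W13 W31 W21 W22).submatrix e id).det
        = (criticalMat W12 U2 W11 W21).det ∨
      ((edmondsMat U1 U3 W12 U2 U4 W11 W13 W31 W21 W22).submatrix e id).det
        = -(criticalMat W12 U2 W11 W21).det :=
  stmt2_general r k m U1 U3 W12 U2 U4 W11 W13 W31 W21 W22 hU4 hU4d e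
end

section
/- For every real q ≥ 3 (in particular every prime power q ≥ 3), the infinite product ∏_{i=1}^∞ (1 − q^{-i}) satisfies ∏_{i=1}^∞ (1 − q^{-i}) ≥ (1 − 3/q)^{1/3}. -/
open Finset

lemma weier (f : ℕ → ℝ) (h0 : ∀ i, 0 ≤ f i) (h1 : ∀ i, f i ≤ 1) (s : Finset ℕ) :
    1 - ∑ i ∈ s, f i ≤ ∏ i ∈ s, (1 - f i) := by
  induction s using Finset.induction with
  | empty => simp
  | @insert a s hnot ih =>
    rw [Finset.sum_insert hnot, Finset.prod_insert hnot]
    have hs0 : 0 ≤ ∑ i ∈ s, f i := Finset.sum_nonneg fun i _ => h0 i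
    nlinarith [h0 a, h1 a, ih]

/-- For every real `q ≥ 3`, the infinite product `∏_{i=1}^∞ (1 - q⁻ⁱ)`
converges and satisfies `∏_{i=1}^∞ (1 - q⁻ⁱ) ≥ (1 - 3/q)^{1/3}`. -/
theorem stmt16 (q : ℝ) (hq : 3 ≤ q) :
    Multipliable (fun i : ℕ => 1 - (q⁻¹) ^ (i + 1)) ∧
      (∏' i : ℕ, (1 - (q⁻¹) ^ (i + 1))) ≥ (1 - 3 / q) ^ ((1 : ℝ) / 3) := by
  have hq0 : 0 < q := by linarith
  set x : ℝ := q⁻¹ with hxdef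
  have hx0 : 0 < x := inv_pos.mpr hq0
  have hx3 : x ≤ 1/3 := by
    rw [hxdef, inv_le_comm₀ hq0 (by norm_num)]
    linarith
  have hx1 : x < 1 := by linarith
  set f : ℕ → ℝ := fun i => x ^ (i + 1) with hfdef
  have hf0 : ∀ i, 0 ≤ f i := fun i => pow_nonneg hx0.le _
  have hf1 : ∀ i, f i ≤ 1 := fun i => pow_le_one₀ hx0.le hx1.le
  have hsum : Summable f := by
    simpa [hfdef, pow_succ, mul_comm] using
      (summable_geometric_of_lt_one hx0.le hx1).mul_left x
  have htsum : ∑' i, f i = x / (1 - x) := by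
    have : ∑' i, f i = x * ∑' i : ℕ, x ^ i := by
      rw [← tsum_mul_left]
      exact tsum_congr fun i => by ring
    rw [this, tsum_geometric_of_lt_one hx0.le hx1]
    field_simp
  -- antitone net of partial products
  have hanti : Antitone (fun s : Finset ℕ => ∏ i ∈ s, (1 - f i)) := by
    intro s t hst
    have hps : (0:ℝ) ≤ ∏ i ∈ s, (1 - f i) :=
      Finset.prod_nonneg fun i _ => by linarith [hf1 i]
    have hle1 : ∏ i ∈ t \ s, (1 - f i) ≤ 1 :=
      Finset.prod_le_one (fun i _ => by linarith [hf1 i]) (fun i _ => by linarith [hf0 i])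
    have h0' : (0:ℝ) ≤ ∏ i ∈ t \ s, (1 - f i) :=
      Finset.prod_nonneg fun i _ => by linarith [hf1 i]
    calc ∏ i ∈ t, (1 - f i) = (∏ i ∈ t \ s, (1 - f i)) * ∏ i ∈ s, (1 - f i) :=
          (Finset.prod_sdiff hst).symm
      _ ≤ 1 * ∏ i ∈ s, (1 - f i) := mul_le_mul_of_nonneg_right hle1 hps
      _ = _ := one_mul _
  have hbdd : BddBelow (Set.range fun s : Finset ℕ => ∏ i ∈ s, (1 - f i)) := by
    refine ⟨0, ?_⟩
    rintro _ ⟨s, rfl⟩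
    exact Finset.prod_nonneg fun i _ => by linarith [hf1 i]
  have hprod : HasProd (fun i => 1 - f i) (⨅ s : Finset ℕ, ∏ i ∈ s, (1 - f i)) :=
    tendsto_atTop_ciInf hanti hbdd
  have hmult : Multipliable (fun i => 1 - f i) := ⟨_, hprod⟩
  refine ⟨hmult, ?_⟩
  rw [hprod.tprod_eq, ge_iff_le]
  have hlow : 1 - x / (1 - x) ≤ ⨅ s : Finset ℕ, ∏ i ∈ s, (1 - f i) := by
    refine le_ciInf fun s => ?_
    calc 1 - x / (1 - x) = 1 - ∑' i, f i := by rw [htsum]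
      _ ≤ 1 - ∑ i ∈ s, f i := by
          have := Summable.sum_le_tsum s (fun i _ => hf0 i) hsum
          linarith
      _ ≤ _ := weier f hf0 hf1 s
  refine le_trans ?_ hlow
  -- rpow inequality: (1-3x)^{1/3} ≤ 1 - x/(1-x)
  set y : ℝ := 1 - x / (1 - x) with hydef
  have h1x : 0 < 1 - x := by linarith
  have hy0 : 0 ≤ y := by
    rw [hydef, sub_nonneg, div_le_one h1x]
    linarith
  have h3x : 0 ≤ 1 - 3 * x := by linarith
  have hcube : 1 - 3 * x ≤ y ^ (3 : ℕ) := by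
    have hy' : y = (1 - 2*x) / (1 - x) := by
      rw [hydef]; field_simp; ring
    rw [hy', div_pow, le_div_iff₀ (by positivity)]
    nlinarith [mul_nonneg (mul_nonneg (mul_nonneg hx0.le hx0.le) hx0.le)
      (by linarith : (0:ℝ) ≤ 2 - 3*x)]
  have hq3 : 1 - 3 / q = 1 - 3 * x := by rw [hxdef]; ring
  rw [hq3]
  calc (1 - 3 * x) ^ ((1:ℝ)/3) ≤ (y ^ (3:ℕ)) ^ ((1:ℝ)/3) :=
        Real.rpow_le_rpow h3x hcube (by norm_num)
    _ = y := by
        rw [← Real.rpow_natCast y 3, ← Real.rpow_mul hy0]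
        norm_num
end
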